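/- Define φ_1 : Σ_3^2 → ℝ by φ_1(x,y) = 1 if (x,y) = (0,0), φ_1(x,y) = −1 if (x,y) = (1,2), and φ_1(x,y) = 0 otherwise, and define φ : Σ_3^3 → ℝ by φ(x,y,z) = φ_1(x ⊕ z, y ⊕ z), where ⊕ denotes addition modulo 3. Then φ belongs to the eigenspace U_2(3,3) of the Hamming graph H(3,3), i.e., λ_2(3,3)·φ(x) = Σ_{y ∈ N(x)} φ(y) with λ_2(3,3) = 0 for every vertex x, and the support of φ has cardinality 6. -/
import Mathlib


/-- `f` belongs to the eigenspace `U_k(n,q)` of the Hamming graph `H(n,q)`,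
i.e. `λ_k(n,q) · f(x) = Σ_{y ∈ N(x)} f(y)` for every vertex `x`, where
`λ_k(n,q) = n(q-1) - q·k` and `N(x)` is the set of vertices at Hamming distance 1 from `x`. -/
def inU (n q k : ℕ) (f : (Fin n → Fin q) → ℝ) : Prop :=
  ∀ x : Fin n → Fin q,
    ((n : ℝ) * ((q : ℝ) - 1) - (q : ℝ) * (k : ℝ)) * f x =
      ∑ y ∈ Finset.univ.filter (fun y : Fin n → Fin q => hammingDist x y = 1), f y

/-- `f` belongs to the direct sum `U_{[i,j]}(n,q) = U_i(n,q) ⊕ … ⊕ U_j(n,q)`,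
i.e. `f = Σ_{k=i}^{j} g_k` with `g_k ∈ U_k(n,q)`. -/
def inUIJ (n q i j : ℕ) (f : (Fin n → Fin q) → ℝ) : Prop :=
  ∃ g : ℕ → (Fin n → Fin q) → ℝ,
    (∀ k ∈ Finset.Icc i j, inU n q k (g k)) ∧ f = ∑ k ∈ Finset.Icc i j, g k

/-- The cardinality of the support of `f`. -/
noncomputable def suppCard (n q : ℕ) (f : (Fin n → Fin q) → ℝ) : ℕ :=
  (Finset.univ.filter (fun x : Fin n → Fin q => f x ≠ 0)).card

/-- `φ_1(x,y) = 1` if `(x,y) = (0,0)`, `-1` if `(x,y) = (1,2)`, `0` otherwise. -/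
def phi1 (x y : Fin 3) : ℝ :=
  if x = 0 ∧ y = 0 then 1 else if x = 1 ∧ y = 2 then -1 else 0

/-- `φ(x,y,z) = φ_1(x ⊕ z, y ⊕ z)`, where `⊕` is addition modulo 3. -/
def phi (v : Fin 3 → Fin 3) : ℝ := phi1 (v 0 + v 2) (v 1 + v 2)


def phiZ (v : Fin 3 → Fin 3) : ℤ :=
  if v 0 + v 2 = 0 ∧ v 1 + v 2 = 0 then 1
  else if v 0 + v 2 = 1 ∧ v 1 + v 2 = 2 then -1 else 0

lemma phi_eq (v : Fin 3 → Fin 3) : phi v = (phiZ v : ℝ) := by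
  unfold phi phi1 phiZ
  split_ifs <;> simp

/-- `φ` belongs to the eigenspace `U_2(3,3)` of `H(3,3)` and its support has
cardinality 6. -/
theorem stmt14 :
    inU 3 3 2 phi ∧ (Finset.univ.filter (fun v : Fin 3 → Fin 3 => phi v ≠ 0)).card = 6 := by
  constructor
  · intro x
    simp only [phi_eq]
    rw [← Int.cast_sum]
    have h : ∀ x : Fin 3 → Fin 3,
        (∑ y ∈ Finset.univ.filter (fun y : Fin 3 → Fin 3 => hammingDist x y = 1), phiZ y) = 0 := by
      decide
    rw [h x]
    norm_num
  · have h : ∀ v : Fin 3 → Fin 3, phi v ≠ 0 ↔ phiZ v ≠ 0 := by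
      intro v; rw [phi_eq]; exact_mod_cast Iff.rfl
    simp only [h]
    decide
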